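/- Let h = ι_X for a closed convex set X ⊆ ℝ^p, let g, f_1,…,f_m be convex and twice continuously differentiable, and let (x*, y*, z*) be a KKT point with x* ∈ int(X). Suppose there is J ⊆ {1,…,m} with f_j(x*) = 0 and z_j* > 0 for j ∈ J, and f_j(x*) < 0 and z_j* = 0 for j ∉ J, and suppose H* := ∇²g(x*) + βAᵀA + ∑_{j∈J}(z_j*∇²f_j(x*) + β∇f_j(x*)∇f_j(x*)ᵀ) is positive definite with smallest eigenvalue μ > 0. Then there exists γ > 0 such that: (i) for every (x, y, z) with max(‖x − x*‖, ‖y − y*‖, ‖z − z*‖) ≤ γ one has x ∈ int(X), β f_j(x) + z_j > 0 for all j ∈ J, β f_j(x) + z_j < 0 for all j ∉ J, and the Hessian ∇²_x L_β(x,y,z) = ∇²g(x) + βAᵀA + ∑_{j∈J}((β f_j(x) + z_j)∇²f_j(x) + β∇f_j(x)∇f_j(x)ᵀ) satisfies ∇²_x L_β(x,y,z) ⪰ (μ/2)I; and (ii) for every x with ‖x − x*‖ ≤ γ, g(x) − g(x*) + ⟨y*, Ax − b⟩ + (β/2)‖Ax − b‖² + Ψ_β(x, z*) − Ψ_β(x*,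 z*) ≥ (μ/4)‖x − x*‖². -/

import Mathlib

/-!
Since `x*` is interior to `X`, the normal-cone term of the KKT condition vanishes, so `x*` is a
critical point of the smooth function
`x ↦ g x + ⟪y*, A x - b⟫ + β/2 ‖A x - b‖² + ∑_{j ∈ J} (f_j(x) z*_j + β/2 f_j(x)²)`,
which coincides with the augmented Lagrangian wherever `β f_j(x) + z*_j` has the same signs as
at `x*`, and whose Hessian is `∇²_x L_β(x, y, z*)`. Strict complementarity keeps these signs on a
neighbourhood of `(x*, z*)`, and by continuity `∇²_x L_β ⪰ (μ/2) I` there, since it equals `H*` at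
`(x*, z*)`. Integrating this Hessian bound twice along the segment from `x*` gives the quadratic
growth `(μ/4) ‖x - x*‖²`.
-/

open scoped RealInnerProductSpace

noncomputable section

/-- The function `ψ_β(u,v)` used in the classic augmented Lagrangian. -/
def psi (β u v : ℝ) : ℝ :=
  if 0 ≤ β * u + v then u * v + β / 2 * u ^ 2 else -(v ^ 2) / (2 * β)

/-- `Ψ_β(x,z) = ∑_j ψ_β(f_j(x), z_j)`. -/
def PsiAug {p m : ℕ} (β : ℝ) (f : Fin m → EuclideanSpace ℝ (Fin p) → ℝ)
    (x : EuclideanSpace ℝ (Fin p)) (z : EuclideanSpace ℝ (Fin m)) : ℝ :=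
  ∑ j, psi β (f j x) (z j)

/-- The rank-one operator `∇f_j(x) ∇f_j(x)ᵀ`, i.e. `u ↦ ⟨∇f_j(x), u⟩ ∇f_j(x)`. -/
def rankOne {p : ℕ} (v : EuclideanSpace ℝ (Fin p)) :
    EuclideanSpace ℝ (Fin p) →L[ℝ] EuclideanSpace ℝ (Fin p) :=
  (innerSL ℝ v).smulRight v

/-- The Hessian `∇²_x L_β(x,y,z)` of the augmented Lagrangian (on the region where
`β f_j(x) + z_j > 0` for `j ∈ J` and `< 0` for `j ∉ J`). -/
def HessL {p q m : ℕ} (β : ℝ) (f : Fin m → EuclideanSpace ℝ (Fin p) → ℝ)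
    (f' : Fin m → EuclideanSpace ℝ (Fin p) → EuclideanSpace ℝ (Fin p))
    (g'' : EuclideanSpace ℝ (Fin p) → EuclideanSpace ℝ (Fin p) →L[ℝ] EuclideanSpace ℝ (Fin p))
    (f'' : Fin m → EuclideanSpace ℝ (Fin p) →
      EuclideanSpace ℝ (Fin p) →L[ℝ] EuclideanSpace ℝ (Fin p))
    (A : EuclideanSpace ℝ (Fin p) →L[ℝ] EuclideanSpace ℝ (Fin q))
    (J : Finset (Fin m)) (x : EuclideanSpace ℝ (Fin p)) (z : EuclideanSpace ℝ (Fin m)) :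
    EuclideanSpace ℝ (Fin p) →L[ℝ] EuclideanSpace ℝ (Fin p) :=
  g'' x + β • ((ContinuousLinearMap.adjoint A).comp A)
    + ∑ j ∈ J, ((β * f j x + z j) • f'' j x + β • rankOne (f' j x))

open Set Filter Topology

section General

variable {E : Type*} [NormedAddCommGroup E] [InnerProductSpace ℝ E]

theorem eq_zero_of_inner_sub_nonpos_of_mem_interior {X : Set E} {x s : E}
    (hx : x ∈ interior X) (hs : ∀ u ∈ X, ⟪s, u - x⟫ ≤ 0) : s = 0 := by
  have hmax : IsLocalMax (innerSL ℝ s) x :=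
    Filter.mem_of_superset (mem_interior_iff_mem_nhds.1 hx) fun u hu => by
      simpa [inner_sub_right] using hs u hu
  simpa using congrArg (· s) (hmax.hasFDerivAt_eq_zero (innerSL ℝ s).hasFDerivAt)

theorem contDiff_one_of_hasGradientAt [CompleteSpace E] {g : E → ℝ} {g' : E → E}
    (hg : ContDiff ℝ 2 g) (hg' : ∀ x, HasGradientAt g (g' x) x) : ContDiff ℝ 1 g' := by
  rw [← gradient_eq hg']
  exact (InnerProductSpace.toDual ℝ E).symm.contDiff.comp (hg.fderiv_right le_rfl)

theorem continuous_of_hasFDerivAt_of_contDiff_one {F : Type*} [NormedAddCommGroup F]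
    [NormedSpace ℝ F] {f : E → F} {f' : E → E →L[ℝ] F} (hf : ContDiff ℝ 1 f)
    (hf' : ∀ x, HasFDerivAt f (f' x) x) : Continuous f' := by
  rw [← funext fun x => (hf' x).fderiv]
  exact hf.continuous_fderiv one_ne_zero

theorem inner_map_self_ge_of_norm_sub_le {T T' : E →L[ℝ] E} {μ δ : ℝ}
    (hT : ∀ u, μ * ‖u‖ ^ 2 ≤ ⟪u, T u⟫) (hT' : ‖T' - T‖ ≤ δ) (u : E) :
    (μ - δ) * ‖u‖ ^ 2 ≤ ⟪u, T' u⟫ := by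
  have hpert : |⟪u, (T' - T) u⟫| ≤ δ * ‖u‖ ^ 2 :=
    calc |⟪u, (T' - T) u⟫| ≤ ‖u‖ * (‖T' - T‖ * ‖u‖) :=
          (abs_real_inner_le_norm _ _).trans (by gcongr; exact (T' - T).le_opNorm u)
      _ ≤ δ * ‖u‖ ^ 2 := by nlinarith [norm_nonneg u]
  have hsplit : ⟪u, T' u⟫ = ⟪u, T u⟫ + ⟪u, (T' - T) u⟫ := by
    rw [sub_apply, inner_sub_right]; ring
  linarith [hT u, (abs_le.1 hpert).1]

theorem le_of_deriv_left_eq_zero_of_deriv2_nonneg {φ φ' φ'' : ℝ → ℝ} {a b : ℝ} (hab : a ≤ b)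
    (hφ : ∀ t ∈ Icc a b, HasDerivAt φ (φ' t) t) (hφ' : ∀ t ∈ Icc a b, HasDerivAt φ' (φ'' t) t)
    (ha : φ' a = 0) (hφ'' : ∀ t ∈ Icc a b, 0 ≤ φ'' t) : φ a ≤ φ b := by
  have hmono : ∀ {ψ ψ' : ℝ → ℝ}, (∀ t ∈ Icc a b, HasDerivAt ψ (ψ' t) t) →
      (∀ t ∈ Ioo a b, 0 ≤ ψ' t) → MonotoneOn ψ (Icc a b) := fun hψ hψ' =>
    monotoneOn_of_deriv_nonneg (convex_Icc a b)
      (fun t ht => (hψ t ht).continuousAt.continuousWithinAt)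
      (fun t ht => (hψ t (interior_subset ht)).differentiableAt.differentiableWithinAt)
      (fun t ht => by
        rw [interior_Icc] at ht
        rw [(hψ t (Ioo_subset_Icc_self ht)).deriv]
        exact hψ' t ht)
  have hφ'_nonneg : ∀ t ∈ Ioo a b, 0 ≤ φ' t := fun t ht =>
    ha ▸ hmono hφ' (fun s hs => hφ'' s (Ioo_subset_Icc_self hs))
      (left_mem_Icc.2 hab) (Ioo_subset_Icc_self ht) ht.1.le
  exact hmono hφ hφ'_nonneg (left_mem_Icc.2 hab) (right_mem_Icc.2 hab) hab

theorem mul_sq_le_sub_of_inner_hessian_ge [CompleteSpace E] {F : E → ℝ} {F' : E → E}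
    {F'' : E → E →L[ℝ] E} {S : Set E} {x₀ x : E} {c : ℝ}
    (hS : Convex ℝ S) (hx₀ : x₀ ∈ S) (hx : x ∈ S)
    (hF : ∀ y ∈ S, HasGradientAt F (F' y) y) (hF' : ∀ y ∈ S, HasFDerivAt F' (F'' y) y)
    (hcrit : F' x₀ = 0) (hc : ∀ y ∈ S, ∀ u, c * ‖u‖ ^ 2 ≤ ⟪u, F'' y u⟫) :
    c / 2 * ‖x - x₀‖ ^ 2 ≤ F x - F x₀ := by
  set d := x - x₀
  have hline : ∀ t : ℝ, HasDerivAt (fun s : ℝ => x₀ + s • d) d t := fun t => by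
    simpa using ((hasDerivAt_id t).smul_const d).const_add x₀
  have hmem : ∀ t ∈ Icc (0 : ℝ) 1, x₀ + t • d ∈ S := fun t ht => hS.add_smul_sub_mem hx₀ hx ht
  have key := le_of_deriv_left_eq_zero_of_deriv2_nonneg zero_le_one
    (φ := fun t => F (x₀ + t • d) - c / 2 * ‖d‖ ^ 2 * t ^ 2)
    (φ' := fun t => ⟪F' (x₀ + t • d), d⟫ - c * ‖d‖ ^ 2 * t)
    (φ'' := fun t => ⟪F'' (x₀ + t • d) d, d⟫ - c * ‖d‖ ^ 2)
    (fun t ht => by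
      have h := ((hF _ (hmem t ht)).hasFDerivAt.comp_hasDerivAt t (hline t)).sub
        ((hasDerivAt_pow 2 t).const_mul (c / 2 * ‖d‖ ^ 2))
      refine h.congr_deriv ?_
      simp only [InnerProductSpace.toDual_apply_apply]
      ring)
    (fun t ht => by
      have h := (((hF' _ (hmem t ht)).comp_hasDerivAt t (hline t)).inner ℝ
        (hasDerivAt_const t d)).sub ((hasDerivAt_id t).const_mul (c * ‖d‖ ^ 2))
      exact h.congr_deriv (by simp))
    (by simp [hcrit])
    (fun t ht => by
      have h := hc _ (hmem t ht) d
      rw [real_inner_comm] at h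
      linarith)
  simp only [zero_smul, add_zero, one_smul, d, add_sub_cancel] at key
  linarith

end General

local notation "𝔼" n:max => EuclideanSpace ℝ (Fin n)

section AugmentedLagrangian

variable {p q m : ℕ} (β : ℝ) {g : 𝔼 p → ℝ} {f : Fin m → 𝔼 p → ℝ} {g' : 𝔼 p → 𝔼 p}
  {f' : Fin m → 𝔼 p → 𝔼 p} {g'' : 𝔼 p → 𝔼 p →L[ℝ] 𝔼 p} {f'' : Fin m → 𝔼 p → 𝔼 p →L[ℝ] 𝔼 p}
  (A : 𝔼 p →L[ℝ] 𝔼 q) (b : 𝔼 q) (J : Finset (Fin m))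

theorem continuous_rankOne : Continuous (rankOne : 𝔼 p → 𝔼 p →L[ℝ] 𝔼 p) :=
  (ContinuousLinearMap.smulRightL ℝ (𝔼 p) (𝔼 p)).continuous₂.comp
    ((innerSL ℝ).continuous.prodMk continuous_id)

theorem continuous_hessL (hf : ∀ j, Continuous (f j)) (hf' : ∀ j, Continuous (f' j))
    (hg'' : Continuous g'') (hf'' : ∀ j, Continuous (f'' j)) :
    Continuous fun w : 𝔼 p × 𝔼 m => HessL β f f' g'' f'' A J w.1 w.2 := by
  have hz : ∀ j, Continuous fun w : 𝔼 p × 𝔼 m => w.2 j := fun j =>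
    (EuclideanSpace.proj j).continuous.comp continuous_snd
  have := continuous_rankOne (p := p)
  unfold HessL
  fun_prop

theorem hessL_eq_of_active {xs : 𝔼 p} (zs : 𝔼 m) (hJ : ∀ j ∈ J, f j xs = 0) :
    HessL β f f' g'' f'' A J xs zs = g'' xs + β • ((ContinuousLinearMap.adjoint A).comp A)
      + ∑ j ∈ J, (zs j • f'' j xs + β • rankOne (f' j xs)) := by
  unfold HessL
  congr 1
  refine Finset.sum_congr rfl fun j hj => ?_
  rw [hJ j hj, mul_zero, zero_add]

variable (g f g' f')

def activeAugLag (y : 𝔼 q) (z : 𝔼 m) (x : 𝔼 p) : ℝ :=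
  g x + ⟪y, A x - b⟫ + β / 2 * ‖A x - b‖ ^ 2 + ∑ j ∈ J, (f j x * z j + β / 2 * f j x ^ 2)

def activeAugLagGrad (y : 𝔼 q) (z : 𝔼 m) (x : 𝔼 p) : 𝔼 p :=
  g' x + ContinuousLinearMap.adjoint A y + β • ContinuousLinearMap.adjoint A (A x - b)
    + ∑ j ∈ J, (β * f j x + z j) • f' j x

variable {g f g' f'}

theorem hasGradientAt_activeAugLag (hg : ∀ x, HasGradientAt g (g' x) x)
    (hf : ∀ j x, HasGradientAt (f j) (f' j x) x) (y : 𝔼 q) (z : 𝔼 m) (x : 𝔼 p) :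
    HasGradientAt (activeAugLag β g f A b J y z) (activeAugLagGrad β f g' f' A b J y z x) x := by
  rw [hasGradientAt_iff_hasFDerivAt]
  have hAx := A.hasFDerivAt.sub_const (x := x) b
  refine ((((hg x).hasFDerivAt.add ((hasFDerivAt_const y x).inner ℝ hAx)).add
    (hAx.norm_sq.const_mul (β / 2))).add (HasFDerivAt.fun_sum fun j _ =>
      ((hf j x).hasFDerivAt.mul_const (z j)).add
        (((hf j x).hasFDerivAt.pow 2).const_mul (β / 2)))).congr_fderiv ?_
  have htwo : ∀ t, β / 2 * (2 * t) = β * t := fun t => by ring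
  ext u
  simp [activeAugLagGrad, ContinuousLinearMap.adjoint_inner_left, htwo, mul_assoc, add_mul,
    add_comm (z _ * _)]

theorem hasFDerivAt_activeAugLagGrad (hf : ∀ j x, HasGradientAt (f j) (f' j x) x)
    (hg'' : ∀ x, HasFDerivAt g' (g'' x) x) (hf'' : ∀ j x, HasFDerivAt (f' j) (f'' j x) x)
    (y : 𝔼 q) (z : 𝔼 m) (x : 𝔼 p) :
    HasFDerivAt (activeAugLagGrad β f g' f' A b J y z) (HessL β f f' g'' f'' A J x z) x := by
  have hAx := A.hasFDerivAt.sub_const (x := x) b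
  refine ((((hg'' x).add (hasFDerivAt_const _ x)).add
    (((ContinuousLinearMap.adjoint A).hasFDerivAt.comp x hAx).const_smul β)).add
    (HasFDerivAt.fun_sum fun j _ =>
      ((((hf j x).hasFDerivAt.const_mul β).add_const (z j)).smul (hf'' j x)))).congr_fderiv ?_
  ext u
  simp [HessL, rankOne, mul_assoc]

theorem activeAugLagGrad_eq_zero {xs : 𝔼 p} {ys : 𝔼 q} {zs : 𝔼 m}
    (hstat : g' xs + ContinuousLinearMap.adjoint A ys + ∑ j, zs j • f' j xs = 0)
    (hfeas : A xs = b) (hJin : ∀ j ∈ J, f j xs = 0) (hJout : ∀ j ∉ J, zs j = 0) :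
    activeAugLagGrad β f g' f' A b J ys zs xs = 0 := by
  have hsum : ∑ j ∈ J, (β * f j xs + zs j) • f' j xs = ∑ j, zs j • f' j xs := by
    rw [← Finset.sum_subset (Finset.subset_univ J) fun j _ hj => by simp [hJout j hj]]
    exact Finset.sum_congr rfl fun j hj => by simp [hJin j hj]
  simp [activeAugLagGrad, hfeas, hsum, hstat]

theorem activeAugLag_eq_of_signs {x : 𝔼 p} (y : 𝔼 q) {z : 𝔼 m}
    (hin : ∀ j ∈ J, 0 ≤ β * f j x + z j) (hout : ∀ j ∉ J, β * f j x + z j < 0)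
    (hz : ∀ j ∉ J, z j = 0) :
    activeAugLag β g f A b J y z x
      = g x + ⟪y, A x - b⟫ + β / 2 * ‖A x - b‖ ^ 2 + PsiAug β f x z := by
  rw [activeAugLag, PsiAug, ← Finset.sum_subset (Finset.subset_univ J) fun j _ hj => by
    rw [psi, if_neg (not_le.2 (hout j hj)), hz j hj]; ring]
  congr 1
  exact Finset.sum_congr rfl fun j hj => by rw [psi, if_pos (hin j hj)]

theorem eventually_activeSet_signs {xs : 𝔼 p} {zs : 𝔼 m} (hβ : 0 < β)
    (hf : ∀ j, Continuous (f j)) (hJin : ∀ j ∈ J, f j xs = 0 ∧ 0 < zs j)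
    (hJout : ∀ j ∉ J, f j xs < 0 ∧ zs j = 0) :
    ∀ᶠ w in 𝓝 (xs, zs),
      (∀ j ∈ J, 0 < β * f j w.1 + w.2 j) ∧ (∀ j ∉ J, β * f j w.1 + w.2 j < 0) := by
  have hcont : ∀ j, ContinuousAt (fun w : 𝔼 p × 𝔼 m => β * f j w.1 + w.2 j) (xs, zs) :=
    fun j => by
      have hz : Continuous fun w : 𝔼 p × 𝔼 m => w.2 j :=
        (EuclideanSpace.proj j).continuous.comp continuous_snd
      have := hf j
      fun_prop
  refine ((eventually_all_finset J).2 fun j hj => continuousAt_const.eventually_lt (hcont j) ?_).and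
    (((eventually_all_finset Jᶜ).2 fun j hj => (hcont j).eventually_lt continuousAt_const ?_).mono
      fun w hw j hj => hw j (Finset.mem_compl.2 hj))
  · simp [(hJin j hj).1, (hJin j hj).2]
  · have := hJout j (Finset.mem_compl.1 hj)
    simp [this.2, mul_neg_of_pos_of_neg hβ this.1]

theorem eventually_inner_hessL_ge {xs : 𝔼 p} {zs : 𝔼 m} {μ : ℝ} (hμ : 0 < μ)
    (hcont : Continuous fun w : 𝔼 p × 𝔼 m => HessL β f f' g'' f'' A J w.1 w.2)
    (hJin : ∀ j ∈ J, f j xs = 0)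
    (hH : ∀ u : 𝔼 p, μ * ‖u‖ ^ 2 ≤ ⟪u, (g'' xs + β • ((ContinuousLinearMap.adjoint A).comp A)
        + ∑ j ∈ J, (zs j • f'' j xs + β • rankOne (f' j xs))) u⟫) :
    ∀ᶠ w in 𝓝 (xs, zs), ∀ u, μ / 2 * ‖u‖ ^ 2 ≤ ⟪u, HessL β f f' g'' f'' A J w.1 w.2 u⟫ := by
  rw [← hessL_eq_of_active β A J zs hJin] at hH
  filter_upwards [Metric.tendsto_nhds.1 hcont.continuousAt (μ / 2) (half_pos hμ)] with w hw u
  have := inner_map_self_ge_of_norm_sub_le hH (dist_eq_norm (E := 𝔼 p →L[ℝ] 𝔼 p) _ _ ▸ hw.le) u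
  linarith

theorem mul_sq_le_augLag_sub {S : Set (𝔼 p)} {xs x : 𝔼 p} {ys : 𝔼 q} {zs : 𝔼 m} {c : ℝ}
    (hg : ∀ x, HasGradientAt g (g' x) x) (hf : ∀ j x, HasGradientAt (f j) (f' j x) x)
    (hg'' : ∀ x, HasFDerivAt g' (g'' x) x) (hf'' : ∀ j x, HasFDerivAt (f' j) (f'' j x) x)
    (hstat : g' xs + ContinuousLinearMap.adjoint A ys + ∑ j, zs j • f' j xs = 0)
    (hfeas : A xs = b) (hJin : ∀ j ∈ J, f j xs = 0) (hJout : ∀ j ∉ J, zs j = 0)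
    (hS : Convex ℝ S) (hxs : xs ∈ S) (hx : x ∈ S)
    (hsigns : ∀ y ∈ S, (∀ j ∈ J, 0 ≤ β * f j y + zs j) ∧ ∀ j ∉ J, β * f j y + zs j < 0)
    (hpos : ∀ y ∈ S, ∀ u, c * ‖u‖ ^ 2 ≤ ⟪u, HessL β f f' g'' f'' A J y zs u⟫) :
    c / 2 * ‖x - xs‖ ^ 2 ≤ g x - g xs + ⟪ys, A x - b⟫ + β / 2 * ‖A x - b‖ ^ 2
      + PsiAug β f x zs - PsiAug β f xs zs := by
  have hgrowth := mul_sq_le_sub_of_inner_hessian_ge hS hxs hx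
    (fun y _ => hasGradientAt_activeAugLag β A b J hg hf ys zs y)
    (fun y _ => hasFDerivAt_activeAugLagGrad β A b J hf hg'' hf'' ys zs y)
    (activeAugLagGrad_eq_zero β A b J hstat hfeas hJin hJout) hpos
  rw [activeAugLag_eq_of_signs β A b J ys (hsigns x hx).1 (hsigns x hx).2 hJout,
    activeAugLag_eq_of_signs β A b J ys (hsigns xs hxs).1 (hsigns xs hxs).2 hJout,
    hfeas, sub_self, inner_zero_right, norm_zero] at hgrowth
  linarith

end AugmentedLagrangian

theorem stmt12_general {p q m : ℕ} (β : ℝ) (hβ : 0 < β)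
    (X : Set (EuclideanSpace ℝ (Fin p)))
    (g : EuclideanSpace ℝ (Fin p) → ℝ)
    (f : Fin m → EuclideanSpace ℝ (Fin p) → ℝ)
    (g' : EuclideanSpace ℝ (Fin p) → EuclideanSpace ℝ (Fin p))
    (f' : Fin m → EuclideanSpace ℝ (Fin p) → EuclideanSpace ℝ (Fin p))
    (g'' : EuclideanSpace ℝ (Fin p) → EuclideanSpace ℝ (Fin p) →L[ℝ] EuclideanSpace ℝ (Fin p))
    (f'' : Fin m → EuclideanSpace ℝ (Fin p) →
      EuclideanSpace ℝ (Fin p) →L[ℝ] EuclideanSpace ℝ (Fin p))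
    (A : EuclideanSpace ℝ (Fin p) →L[ℝ] EuclideanSpace ℝ (Fin q))
    (b : EuclideanSpace ℝ (Fin q))
    (hgsm : ContDiff ℝ 2 g) (hfsm : ∀ j, ContDiff ℝ 2 (f j))
    (hg : ∀ x, HasGradientAt g (g' x) x)
    (hf : ∀ j x, HasGradientAt (f j) (f' j x) x)
    (hg'' : ∀ x, HasFDerivAt g' (g'' x) x)
    (hf'' : ∀ j x, HasFDerivAt (f' j) (f'' j x) x)
    -- the KKT point `(x*, y*, z*)` with `x* ∈ int(X)`
    (xs : EuclideanSpace ℝ (Fin p)) (ys : EuclideanSpace ℝ (Fin q))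
    (zs : EuclideanSpace ℝ (Fin m))
    (hxs : xs ∈ interior X)
    (hkkt1 : ∃ s : EuclideanSpace ℝ (Fin p), (∀ u ∈ X, ⟪s, u - xs⟫ ≤ 0) ∧
      g' xs + s + (ContinuousLinearMap.adjoint A) ys + ∑ j, zs j • f' j xs = 0)
    (hkkt2 : A xs = b)
    -- the non-degeneracy structure
    (J : Finset (Fin m))
    (hJin : ∀ j ∈ J, f j xs = 0 ∧ 0 < zs j)
    (hJout : ∀ j ∉ J, f j xs < 0 ∧ zs j = 0)
    -- `H*` is positive definite with smallest eigenvalue `μ > 0`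
    (μ : ℝ) (hμ : 0 < μ)
    (hH : ∀ u : EuclideanSpace ℝ (Fin p),
      μ * ‖u‖ ^ 2 ≤ ⟪u, (g'' xs + β • ((ContinuousLinearMap.adjoint A).comp A)
        + ∑ j ∈ J, (zs j • f'' j xs + β • rankOne (f' j xs))) u⟫) :
    ∃ γ : ℝ, 0 < γ ∧
      (∀ (x : EuclideanSpace ℝ (Fin p)) (y : EuclideanSpace ℝ (Fin q))
          (z : EuclideanSpace ℝ (Fin m)),
        ‖x - xs‖ ≤ γ → ‖y - ys‖ ≤ γ → ‖z - zs‖ ≤ γ →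
          x ∈ interior X ∧
          (∀ j ∈ J, 0 < β * f j x + z j) ∧
          (∀ j ∉ J, β * f j x + z j < 0) ∧
          (∀ u : EuclideanSpace ℝ (Fin p),
            μ / 2 * ‖u‖ ^ 2 ≤ ⟪u, (HessL β f f' g'' f'' A J x z) u⟫)) ∧
      (∀ x : EuclideanSpace ℝ (Fin p), ‖x - xs‖ ≤ γ →
        μ / 4 * ‖x - xs‖ ^ 2
          ≤ g x - g xs + ⟪ys, A x - b⟫ + β / 2 * ‖A x - b‖ ^ 2
            + PsiAug β f x zs - PsiAug β f xs zs) := by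
  obtain ⟨s, hs, hstat⟩ := hkkt1
  obtain rfl : s = 0 := eq_zero_of_inner_sub_nonpos_of_mem_interior hxs hs
  have hfC1 := fun j => contDiff_one_of_hasGradientAt (hfsm j) (hf j)
  have hHess := continuous_hessL β A J (fun j => (hfsm j).continuous)
    (fun j => (hfC1 j).continuous)
    (continuous_of_hasFDerivAt_of_contDiff_one (contDiff_one_of_hasGradientAt hgsm hg) hg'')
    (fun j => continuous_of_hasFDerivAt_of_contDiff_one (hfC1 j) (hf'' j))
  have hnear := (continuousAt_fst.eventually_mem (isOpen_interior.mem_nhds hxs)).and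
    ((eventually_activeSet_signs β J hβ (fun j => (hfsm j).continuous) hJin hJout).and
      (eventually_inner_hessL_ge β A J hμ hHess (fun j hj => (hJin j hj).1) hH))
  obtain ⟨ε, hε, hball⟩ := Metric.eventually_nhds_iff.1 hnear
  have hclose : ∀ x z, ‖x - xs‖ ≤ ε / 2 → ‖z - zs‖ ≤ ε / 2 → dist (x, z) (xs, zs) < ε :=
    fun x z hx hz => by
      rw [Prod.dist_eq, dist_eq_norm, dist_eq_norm]
      exact max_lt (by linarith) (by linarith)
  refine ⟨ε / 2, half_pos hε, fun x y z hx _ hz => ?_, fun x hx => ?_⟩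
  · obtain ⟨hX, ⟨hin, hout⟩, hpos⟩ := hball (hclose x z hx hz)
    exact ⟨hX, hin, hout, hpos⟩
  · have hzs : ‖zs - zs‖ ≤ ε / 2 := by simpa using (half_pos hε).le
    have hball' := fun y (hy : y ∈ Metric.closedBall xs (ε / 2)) =>
      hball (hclose y zs (mem_closedBall_iff_norm.1 hy) hzs)
    calc μ / 4 * ‖x - xs‖ ^ 2 = μ / 2 / 2 * ‖x - xs‖ ^ 2 := by ring
      _ ≤ _ := mul_sq_le_augLag_sub β A b J hg hf hg'' hf'' (by simpa using hstat) hkkt2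
          (fun j hj => (hJin j hj).1) (fun j hj => (hJout j hj).2) (convex_closedBall xs _)
          (Metric.mem_closedBall_self (half_pos hε).le) (mem_closedBall_iff_norm.2 hx)
          (fun y hy => ⟨fun j hj => ((hball' y hy).2.1.1 j hj).le, (hball' y hy).2.1.2⟩)
          (fun y hy => (hball' y hy).2.2)

/-- Proposition: local positive definiteness and strong convexity near a
non-degenerate KKT point, for `h = ι_X`. -/
theorem stmt12 {p q m : ℕ} (β : ℝ) (hβ : 0 < β)
    (X : Set (EuclideanSpace ℝ (Fin p))) (hXclosed : IsClosed X) (hXconv : Convex ℝ X)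
    (g : EuclideanSpace ℝ (Fin p) → ℝ)
    (f : Fin m → EuclideanSpace ℝ (Fin p) → ℝ)
    (g' : EuclideanSpace ℝ (Fin p) → EuclideanSpace ℝ (Fin p))
    (f' : Fin m → EuclideanSpace ℝ (Fin p) → EuclideanSpace ℝ (Fin p))
    (g'' : EuclideanSpace ℝ (Fin p) → EuclideanSpace ℝ (Fin p) →L[ℝ] EuclideanSpace ℝ (Fin p))
    (f'' : Fin m → EuclideanSpace ℝ (Fin p) →
      EuclideanSpace ℝ (Fin p) →L[ℝ] EuclideanSpace ℝ (Fin p))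
    (A : EuclideanSpace ℝ (Fin p) →L[ℝ] EuclideanSpace ℝ (Fin q))
    (b : EuclideanSpace ℝ (Fin q))
    (hgconv : ConvexOn ℝ Set.univ g) (hfconv : ∀ j, ConvexOn ℝ Set.univ (f j))
    (hgsm : ContDiff ℝ 2 g) (hfsm : ∀ j, ContDiff ℝ 2 (f j))
    (hg : ∀ x, HasGradientAt g (g' x) x)
    (hf : ∀ j x, HasGradientAt (f j) (f' j x) x)
    (hg'' : ∀ x, HasFDerivAt g' (g'' x) x)
    (hf'' : ∀ j x, HasFDerivAt (f' j) (f'' j x) x)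
    -- the KKT point `(x*, y*, z*)` with `x* ∈ int(X)`
    (xs : EuclideanSpace ℝ (Fin p)) (ys : EuclideanSpace ℝ (Fin q))
    (zs : EuclideanSpace ℝ (Fin m))
    (hxs : xs ∈ interior X)
    (hkkt1 : ∃ s : EuclideanSpace ℝ (Fin p), (∀ u ∈ X, ⟪s, u - xs⟫ ≤ 0) ∧
      g' xs + s + (ContinuousLinearMap.adjoint A) ys + ∑ j, zs j • f' j xs = 0)
    (hkkt2 : A xs = b)
    (hkkt3 : ∀ j, 0 ≤ zs j ∧ f j xs ≤ 0 ∧ zs j * f j xs = 0)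
    -- the non-degeneracy structure
    (J : Finset (Fin m))
    (hJin : ∀ j ∈ J, f j xs = 0 ∧ 0 < zs j)
    (hJout : ∀ j ∉ J, f j xs < 0 ∧ zs j = 0)
    -- `H*` is positive definite with smallest eigenvalue `μ > 0`
    (μ : ℝ) (hμ : 0 < μ)
    (hH : ∀ u : EuclideanSpace ℝ (Fin p),
      μ * ‖u‖ ^ 2 ≤ ⟪u, (g'' xs + β • ((ContinuousLinearMap.adjoint A).comp A)
        + ∑ j ∈ J, (zs j • f'' j xs + β • rankOne (f' j xs))) u⟫) :
    ∃ γ : ℝ, 0 < γ ∧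
      (∀ (x : EuclideanSpace ℝ (Fin p)) (y : EuclideanSpace ℝ (Fin q))
          (z : EuclideanSpace ℝ (Fin m)),
        ‖x - xs‖ ≤ γ → ‖y - ys‖ ≤ γ → ‖z - zs‖ ≤ γ →
          x ∈ interior X ∧
          (∀ j ∈ J, 0 < β * f j x + z j) ∧
          (∀ j ∉ J, β * f j x + z j < 0) ∧
          (∀ u : EuclideanSpace ℝ (Fin p),
            μ / 2 * ‖u‖ ^ 2 ≤ ⟪u, (HessL β f f' g'' f'' A J x z) u⟫)) ∧
      (∀ x : EuclideanSpace ℝ (Fin p), ‖x - xs‖ ≤ γ →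
        μ / 4 * ‖x - xs‖ ^ 2
          ≤ g x - g xs + ⟪ys, A x - b⟫ + β / 2 * ‖A x - b‖ ^ 2
            + PsiAug β f x zs - PsiAug β f xs zs) :=
  stmt12_general β hβ X g f g' f' g'' f'' A b hgsm hfsm hg hf hg'' hf'' xs ys zs hxs hkkt1 hkkt2 J
    hJin hJout μ hμ hH

end
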